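/- Let $G = (V, E)$ be a finite undirected graph and $p : V \to (0,1]$. For each $v$ let $P(v) = p(v) + \sum_{v' : (v,v') \in E} p(v')$ be the total mass on the closed neighborhood of $v$. Then $\sum_{v \in V} \frac{p(v)}{P(v)} \leq \alpha(G)$, where $\alpha(G)$ is the independence number of $G$. -/

import Mathlib

/-!
Greedy argument (Caro–Wei, weighted). Pick a vertex `w` whose closed neighbourhood `N[w]` has the
least weight `P(w)`. Every `v ∈ N[w]` has `P(v) ≥ P(w)`, so the terms `p v / P v` over `N[w]`
sum to at most `∑_{v ∈ N[w]} p v / P w = 1`. Deleting `N[w]` only decreases the weights `P` of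
the remaining vertices, so their terms only grow; by induction the remaining graph contains an
independent set at least as large as their sum, and adding `w` to it accounts for the `1`.
-/

open Finset

/-- A finset of vertices is independent: no two distinct members are adjacent. -/
def IsIndepSet {V : Type*} (G : SimpleGraph V) (s : Finset V) : Prop :=
  ∀ u ∈ s, ∀ v ∈ s, u ≠ v → ¬ G.Adj u v

/-- The independence number of a finite graph. -/
noncomputable def indepNum (V : Type*) [Fintype V] (G : SimpleGraph V) : ℕ :=
  sSup {n : ℕ | ∃ s : Finset V, IsIndepSet G s ∧ s.card = n}

namespace IsIndepSet

variable {V : Type*} {G : SimpleGraph V}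

theorem insert [DecidableEq V] {t : Finset V} {w : V} (ht : IsIndepSet G t)
    (hw : ∀ u ∈ t, ¬ G.Adj w u) : IsIndepSet G (insert w t) := by
  intro u hu v hv huv
  rcases mem_insert.mp hu with huw | hut <;> rcases mem_insert.mp hv with hvw | hvt
  · exact absurd (huw.trans hvw.symm) huv
  · exact huw ▸ hw v hvt
  · exact fun h => hw u hut (hvw ▸ h.symm)
  · exact ht u hut v hvt huv

theorem card_le_indepNum [Fintype V] {t : Finset V} (ht : IsIndepSet G t) :
    t.card ≤ indepNum V G := by
  refine le_csSup ⟨Fintype.card V, ?_⟩ ⟨t, ht, rfl⟩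
  rintro n ⟨s, -, rfl⟩
  exact s.card_le_univ

end IsIndepSet

section ClosedNbhdWeight

variable {V : Type*} (G : SimpleGraph V) [DecidableRel G.Adj] (p : V → ℝ)

/-- The weight `P(v)` of the closed neighbourhood of `v` in the subgraph induced on `s`. -/
def closedNbhdWeight (s : Finset V) (v : V) : ℝ :=
  p v + ∑ u ∈ s with G.Adj v u, p u

variable {G p}

theorem closedNbhdWeight_pos (hp : ∀ v, 0 < p v) (s : Finset V) (v : V) :
    0 < closedNbhdWeight G p s v :=
  add_pos_of_pos_of_nonneg (hp v) (sum_nonneg fun u _ => (hp u).le)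

theorem closedNbhdWeight_mono (hp : ∀ v, 0 ≤ p v) {s t : Finset V} (hst : s ⊆ t) (v : V) :
    closedNbhdWeight G p s v ≤ closedNbhdWeight G p t v :=
  add_le_add_right (sum_le_sum_of_subset_of_nonneg (filter_subset_filter _ hst)
    fun u _ _ => hp u) _

theorem sum_closedNbhd_div_closedNbhdWeight_le_one [DecidableEq V] (hp : ∀ v, 0 < p v)
    {s : Finset V} {w : V} (hws : w ∈ s)
    (hmin : ∀ v ∈ s, closedNbhdWeight G p s w ≤ closedNbhdWeight G p s v) :
    ∑ v ∈ insert w {u ∈ s | G.Adj w u}, p v / closedNbhdWeight G p s v ≤ 1 := by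
  have hN : insert w {u ∈ s | G.Adj w u} ⊆ s := insert_subset hws (filter_subset _ _)
  have hPw := closedNbhdWeight_pos (G := G) hp s w
  calc ∑ v ∈ insert w {u ∈ s | G.Adj w u}, p v / closedNbhdWeight G p s v
      ≤ ∑ v ∈ insert w {u ∈ s | G.Adj w u}, p v / closedNbhdWeight G p s w :=
        sum_le_sum fun v hv => div_le_div_of_nonneg_left (hp v).le hPw (hmin v (hN hv))
    _ = closedNbhdWeight G p s w / closedNbhdWeight G p s w := by
        rw [← sum_div, sum_insert (by simp), closedNbhdWeight]
    _ = 1 := div_self hPw.ne'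

theorem exists_isIndepSet_sum_div_closedNbhdWeight_le [DecidableEq V] (hp : ∀ v, 0 < p v)
    (s : Finset V) :
    ∃ t ⊆ s, IsIndepSet G t ∧ ∑ v ∈ s, p v / closedNbhdWeight G p s v ≤ t.card := by
  induction s using strongInduction with
  | H s ih =>
  rcases s.eq_empty_or_nonempty with rfl | hne
  · exact ⟨∅, empty_subset _, by simp [IsIndepSet], by simp⟩
  obtain ⟨w, hws, hmin⟩ := s.exists_min_image (closedNbhdWeight G p s) hne
  set N := insert w {u ∈ s | G.Adj w u}
  have hN : N ⊆ s := insert_subset hws (filter_subset _ _)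
  obtain ⟨t, hts, ht, hsum⟩ := ih (s \ N) (sdiff_ssubset hN (insert_nonempty _ _))
  have hwt : w ∉ t := fun h => (mem_sdiff.mp (hts h)).2 (mem_insert_self _ _)
  have hwadj : ∀ u ∈ t, ¬ G.Adj w u := fun u hu hadj =>
    have hu' := mem_sdiff.mp (hts hu)
    hu'.2 (mem_insert_of_mem (mem_filter.mpr ⟨hu'.1, hadj⟩))
  refine ⟨insert w t, insert_subset hws (hts.trans sdiff_subset), ht.insert hwadj, ?_⟩
  have hrest : ∑ v ∈ s \ N, p v / closedNbhdWeight G p s v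
      ≤ ∑ v ∈ s \ N, p v / closedNbhdWeight G p (s \ N) v :=
    sum_le_sum fun v _ => div_le_div_of_nonneg_left (hp v).le
      (closedNbhdWeight_pos hp _ v) (closedNbhdWeight_mono (fun u => (hp u).le) sdiff_subset v)
  rw [← sum_sdiff hN, card_insert_of_notMem hwt, Nat.cast_succ]
  exact add_le_add (hrest.trans hsum) (sum_closedNbhd_div_closedNbhdWeight_le_one hp hws hmin)

end ClosedNbhdWeight

theorem stmt_7_general {V : Type*} [Fintype V]
    (G : SimpleGraph V) [DecidableRel G.Adj]
    (p : V → ℝ) (hp : ∀ v, 0 < p v) :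
    ∑ v, p v / (p v + ∑ v' ∈ G.neighborFinset v, p v') ≤ (indepNum V G : ℝ) := by
  classical
  obtain ⟨t, -, ht, hsum⟩ := exists_isIndepSet_sum_div_closedNbhdWeight_le (G := G) hp univ
  have hP : ∀ v, closedNbhdWeight G p univ v = p v + ∑ v' ∈ G.neighborFinset v, p v' := by
    simp [closedNbhdWeight, SimpleGraph.neighborFinset_eq_filter]
  simp only [hP] at hsum
  exact hsum.trans (by exact_mod_cast ht.card_le_indepNum)

theorem stmt_7 {V : Type*} [Fintype V] [DecidableEq V]
    (G : SimpleGraph V) [DecidableRel G.Adj]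
    (p : V → ℝ) (hp : ∀ v, 0 < p v) (hp1 : ∀ v, p v ≤ 1) :
    ∑ v, p v / (p v + ∑ v' ∈ G.neighborFinset v, p v') ≤ (indepNum V G : ℝ) :=
  stmt_7_general G p hp
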